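/- arXiv:2509.19974 — 6 statements merged into one kernel-verified Lean document; each statement's English description precedes it below -/
import Mathlib

section
/- Let x, y : ℤ → ℝ be finitely supported signals, and suppose there exist ν ∈ ℤ and a real number a > 0 such that x[n] = a · y[n + ν] for all n ∈ ℤ. Then for every pair of monotonically non-decreasing functions φ, ψ : ℝ → ℝ with φ(0) = ψ(0) = 0, the cross-correlation function of φ ∘ x and ψ ∘ y is maximized at ν; that is, ((φ ∘ x) ⋆ (ψ ∘ y))[n] ≤ ((φ ∘ x) ⋆ (ψ ∘ y))[ν] for all n ∈ ℤ. -/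
/-!
Reindexing by `ν` writes `φ ∘ x` as `k ↦ φ (a * y (k + ν))`. Both `t ↦ φ (a * t)` and `ψ` are
monotone, so `k ↦ φ (a * y k)` and `ψ ∘ y` monovary, and the correlation at lag `n` pairs them
after the shift `k ↦ k + (ν - n)`. By the rearrangement inequality no such shift increases the
sum, and the shift by `0` is the lag `ν`.
-/

open Function Set

/-- The finite support of `g` and its image under `e` form a finite set on which `e` extends to
a permutation, so the finite rearrangement inequality applies. -/
theorem Monovary.finsum_comp_mul_le_finsum_mul {ι α : Type*} [Semiring α] [LinearOrder α]
    [IsStrictOrderedRing α] [ExistsAddOfLE α] {f g : ι → α} (hfg : Monovary f g)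
    (hg : (support g).Finite) {e : ι → ι} (he : InjOn e (support g)) :
    ∑ᶠ i, f (e i) * g i ≤ ∑ᶠ i, f i * g i := by
  classical
  set u : Finset ι := hg.toFinset ∪ hg.toFinset.image e
  have hsupp : ∀ h : ι → α, support (fun i ↦ h i * g i) ⊆ u := fun h i hi ↦
    Finset.mem_union_left _ (hg.mem_toFinset.2 (right_ne_zero_of_mul hi))
  obtain ⟨σ, hσ⟩ : ∃ σ : u ≃ u, ∀ i ∈ {i : u | g i ≠ 0}, (σ i : ι) = e i := by
    refine Set.MapsTo.exists_equiv_extend_of_card_eq (Fintype.card_coe u) ?_ ?_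
    · exact fun i hi ↦
        Finset.mem_union_right _ (Finset.mem_image_of_mem e (hg.mem_toFinset.2 hi))
    · exact fun i hi j hj hij ↦ Subtype.ext (he hi hj hij)
  calc ∑ᶠ i, f (e i) * g i = ∑ i : u, f (σ i) * g i := by
        rw [finsum_eq_finsetSum_of_support_subset _ (hsupp fun i ↦ f (e i)),
          ← Finset.sum_coe_sort u]
        refine Finset.sum_congr rfl fun i _ ↦ ?_
        by_cases hi : g i = 0
        · simp only [hi, mul_zero]
        · rw [hσ i hi]
    _ ≤ ∑ i : u, f i * g i := (hfg.comp_right Subtype.val).sum_comp_perm_mul_le_sum_mul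
    _ = ∑ᶠ i, f i * g i := by
        rw [finsum_eq_finsetSum_of_support_subset _ (hsupp f)]
        exact Finset.sum_coe_sort u fun i ↦ f i * g i

theorem crosscorr_comp_monotone_max_at_shift_general
    (x y : ℤ → ℝ)
    (hy : (Function.support y).Finite)
    (ν : ℤ) (a : ℝ) (ha : 0 < a)
    (hxy : ∀ n : ℤ, x n = a * y (n + ν))
    (φ ψ : ℝ → ℝ) (hφ : Monotone φ) (hψ : Monotone ψ)
    (hψ0 : ψ 0 = 0) :
    ∀ n : ℤ,
      (∑ᶠ m : ℤ, φ (x m) * ψ (y (m + n))) ≤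
        ∑ᶠ m : ℤ, φ (x m) * ψ (y (m + ν)) := by
  intro n
  have reindex (c : ℤ) : ∑ᶠ m, φ (x m) * ψ (y (m + c)) =
      ∑ᶠ k, φ (a * y (k + (ν - c))) * ψ (y k) := by
    rw [← finsum_comp_equiv (Equiv.addRight c)
      (f := fun k ↦ φ (a * y (k + (ν - c))) * ψ (y k))]
    refine finsum_congr fun m ↦ ?_
    rw [Equiv.coe_addRight, hxy, add_add_sub_cancel]
  have hmono : Monovary (fun k ↦ φ (a * y k)) (fun k ↦ ψ (y k)) :=
    ((hφ.comp (monotone_mul_left_of_nonneg ha.le)).monovary hψ).comp_right y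
  have hψy : (support fun k ↦ ψ (y k)).Finite := hy.subset (support_comp_subset hψ0 y)
  rw [reindex n, reindex ν, sub_self]
  simpa only [add_zero] using
    hmono.finsum_comp_mul_le_finsum_mul hψy (add_left_injective (ν - n)).injOn

/-- Cross-correlation peak invariance under monotone transformations:
if `x[n] = a * y[n + ν]` for all `n` with `a > 0`, then for any monotone
non-decreasing `φ, ψ` vanishing at `0`, the cross-correlation of `φ ∘ x`
and `ψ ∘ y` is maximized at `ν`. -/
theorem crosscorr_comp_monotone_max_at_shift
    (x y : ℤ → ℝ)
    (hx : (Function.support x).Finite)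
    (hy : (Function.support y).Finite)
    (ν : ℤ) (a : ℝ) (ha : 0 < a)
    (hxy : ∀ n : ℤ, x n = a * y (n + ν))
    (φ ψ : ℝ → ℝ) (hφ : Monotone φ) (hψ : Monotone ψ)
    (hφ0 : φ 0 = 0) (hψ0 : ψ 0 = 0) :
    ∀ n : ℤ,
      (∑ᶠ m : ℤ, φ (x m) * ψ (y (m + n))) ≤
        ∑ᶠ m : ℤ, φ (x m) * ψ (y (m + ν)) :=
  crosscorr_comp_monotone_max_at_shift_general x y hy ν a ha hxy φ ψ hφ hψ hψ0
end

section
/- Let x, y : ℤ → ℝ be finitely supported signals, and suppose there exist ν ∈ ℤ and a real number a > 0 such that x[n] = a · y[n + ν] for all n ∈ ℤ. Then the cross-correlation function of x and y is maximized at ν; that is, (x ⋆ y)[n] ≤ (x ⋆ y)[ν] for all n ∈ ℤ. -/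
/-!
Since `x = a • y(· + ν)`, the correlation at lag `n` is `a` times `∑ y(m + ν) y(m + n)`.
Termwise `2uv ≤ u² + v²`, and a finite sum is invariant under translation of the index,
so this is at most `∑ y(m)² = ∑ y(m + ν)²`, which is `a⁻¹` times the correlation at lag `ν`.
-/

open Function

theorem finsum_comp_add_right {G M : Type*} [AddGroup G] [AddCommMonoid M] (f : G → M) (k : G) :
    ∑ᶠ m, f (m + k) = ∑ᶠ m, f m :=
  finsum_comp_equiv (Equiv.addRight k)

theorem finsum_mul_comp_add_right_le_finsum_sq {G R : Type*} [AddGroup G] [CommRing R]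
    [LinearOrder R] [IsStrictOrderedRing R] {f : G → R} (hf : f.HasFiniteSupport) (k l : G) :
    ∑ᶠ m, f (m + k) * f (m + l) ≤ ∑ᶠ m, f m ^ 2 := by
  have hsupp (j : G) : HasFiniteSupport fun m => f (m + j) :=
    hf.fun_comp_of_injective (add_left_injective j)
  have hsupp_sq (j : G) : HasFiniteSupport fun m => f (m + j) ^ 2 := by
    simpa [HasFiniteSupport] using hsupp j
  have key : 2 * ∑ᶠ m, f (m + k) * f (m + l) ≤ 2 * ∑ᶠ m, f m ^ 2 :=
    calc 2 * ∑ᶠ m, f (m + k) * f (m + l) = ∑ᶠ m, 2 * f (m + k) * f (m + l) := by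
          simp only [mul_finsum, mul_assoc]
      _ ≤ ∑ᶠ m, (f (m + k) ^ 2 + f (m + l) ^ 2) :=
          finsum_le_finsum' ((hsupp l).mul_right _) ((hsupp_sq k).add (hsupp_sq l))
            fun m => two_mul_le_add_sq _ _
      _ = 2 * ∑ᶠ m, f m ^ 2 := by
          rw [finsum_add_distrib (hsupp_sq k) (hsupp_sq l),
            finsum_comp_add_right (f · ^ 2), finsum_comp_add_right (f · ^ 2), two_mul]
  exact le_of_mul_le_mul_left key two_pos

theorem crosscorr_max_at_shift_general
    (x y : ℤ → ℝ)
    (hy : (Function.support y).Finite)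
    (ν : ℤ) (a : ℝ) (ha : 0 < a)
    (hxy : ∀ n : ℤ, x n = a * y (n + ν)) :
    ∀ n : ℤ,
      (∑ᶠ m : ℤ, x m * y (m + n)) ≤ ∑ᶠ m : ℤ, x m * y (m + ν) := by
  intro n
  have hx_mul (k : ℤ) : ∑ᶠ m, x m * y (m + k) = a * ∑ᶠ m, y (m + ν) * y (m + k) := by
    simp only [hxy, mul_finsum, mul_assoc]
  calc ∑ᶠ m, x m * y (m + n) = a * ∑ᶠ m, y (m + ν) * y (m + n) := hx_mul n
    _ ≤ a * ∑ᶠ m, y m ^ 2 := by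
        gcongr; exact finsum_mul_comp_add_right_le_finsum_sq hy ν n
    _ = ∑ᶠ m, x m * y (m + ν) := by
        rw [hx_mul ν, ← finsum_comp_add_right (y · ^ 2) ν]
        simp only [sq]

/-- If `x[n] = a * y[n + ν]` for all `n` with `a > 0`, then the
cross-correlation of `x` and `y` is maximized at `ν`. -/
theorem crosscorr_max_at_shift
    (x y : ℤ → ℝ)
    (hx : (Function.support x).Finite)
    (hy : (Function.support y).Finite)
    (ν : ℤ) (a : ℝ) (ha : 0 < a)
    (hxy : ∀ n : ℤ, x n = a * y (n + ν)) :
    ∀ n : ℤ,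
      (∑ᶠ m : ℤ, x m * y (m + n)) ≤ ∑ᶠ m : ℤ, x m * y (m + ν) :=
  crosscorr_max_at_shift_general x y hy ν a ha hxy
end

section
/- Let f, g : ℤ → ℝ be finitely supported signals and ν ∈ ℤ, and suppose the pair (f, g shifted by ν) is similarly ordered: for all m, m' ∈ ℤ, (f[m] − f[m']) · (g[m + ν] − g[m' + ν]) ≥ 0. Then the cross-correlation function of f and g is maximized at ν; that is, (f ⋆ g)[n] ≤ (f ⋆ g)[ν] for all n ∈ ℤ. -/
/-!
Similar ordering of `f` and `g(· + ν)` is monovariance, so the rearrangement inequality applies.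
The shift `m ↦ m + (n - ν)` is not a permutation with finite support, but only its values on the
finite support of `f` matter, and an injection of a finite set extends to a permutation of `ℤ`
moving only finitely many points.
-/

open Equiv Finset

theorem Finset.exists_perm_extend_of_injOn {α : Type*} [DecidableEq α] {s t : Finset α}
    {φ : α → α} (hφ : Set.InjOn φ s) (hst : s ⊆ t) (hφst : s.image φ ⊆ t) :
    ∃ σ : Perm α, (∀ x ∈ s, σ x = φ x) ∧ {x | σ x ≠ x} ⊆ t := by
  have hmaps : Set.MapsTo (fun x : t ↦ φ x) {x | ↑x ∈ s} t := fun x hx ↦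
    hφst (mem_image_of_mem φ hx)
  have hinj : Set.InjOn (fun x : t ↦ φ x) {x | ↑x ∈ s} := fun x hx y hy hxy ↦
    Subtype.ext (hφ hx hy hxy)
  obtain ⟨e, he⟩ := hmaps.exists_equiv_extend_of_card_eq (Fintype.card_coe t) hinj
  refine ⟨Perm.ofSubtype e, fun x hx ↦ ?_, fun x hx ↦ ?_⟩
  · rw [Perm.ofSubtype_apply_of_mem e (hst hx)]
    exact he ⟨x, hst hx⟩ hx
  · by_contra hxt
    exact hx (Perm.ofSubtype_apply_of_not_mem e hxt)

theorem Monovary.finsum_mul_comp_le_finsum_mul {ι R : Type*} [Semiring R] [LinearOrder R]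
    [IsStrictOrderedRing R] [ExistsAddOfLE R] {f g : ι → R} (hfg : Monovary f g)
    (hf : f.support.Finite) {φ : ι → ι} (hφ : Set.InjOn φ f.support) :
    ∑ᶠ i, f i * g (φ i) ≤ ∑ᶠ i, f i * g i := by
  classical
  set s := hf.toFinset
  obtain ⟨σ, hσφ, hσ⟩ := exists_perm_extend_of_injOn (t := s ∪ s.image φ)
    (by simpa [s] using hφ) subset_union_left subset_union_right
  have hsupp : ∀ h : ι → R, (fun i ↦ f i * h i).support ⊆ ↑(s ∪ s.image φ) := fun h i hi ↦
    mem_union_left _ (by simpa [s] using left_ne_zero_of_mul hi)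
  have hφσ : ∀ i, f i * g (φ i) = f i * g (σ i) := fun i ↦ by
    by_cases hi : f i = 0
    · simp [hi]
    · rw [hσφ i (by simpa [s] using hi)]
  rw [finsum_congr hφσ, finsum_eq_sum_of_support_subset _ (hsupp fun i ↦ g (σ i)),
    finsum_eq_sum_of_support_subset _ (hsupp g)]
  exact (hfg.monovaryOn _).sum_mul_comp_perm_le_sum_mul hσ

theorem crosscorr_max_of_similarly_ordered_general
    (f g : ℤ → ℝ)
    (hf : (Function.support f).Finite)
    (ν : ℤ)
    (hord : ∀ m m' : ℤ, (f m - f m') * (g (m + ν) - g (m' + ν)) ≥ 0) :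
    ∀ n : ℤ,
      (∑ᶠ m : ℤ, f m * g (m + n)) ≤ ∑ᶠ m : ℤ, f m * g (m + ν) := by
  intro n
  have hmono : Monovary f (fun m ↦ g (m + ν)) :=
    monovary_iff_forall_mul_nonneg.2 fun i j ↦ hord j i
  have hshift : ∀ m, g (m + (n - ν) + ν) = g (m + n) := fun m ↦ by rw [add_assoc, sub_add_cancel]
  simpa only [hshift] using
    hmono.finsum_mul_comp_le_finsum_mul hf (add_left_injective (n - ν)).injOn

/-- If the pair `(f, g shifted by ν)` is similarly ordered, then the
cross-correlation of `f` and `g` is maximized at `ν`. -/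
theorem crosscorr_max_of_similarly_ordered
    (f g : ℤ → ℝ)
    (hf : (Function.support f).Finite)
    (hg : (Function.support g).Finite)
    (ν : ℤ)
    (hord : ∀ m m' : ℤ, (f m - f m') * (g (m + ν) - g (m' + ν)) ≥ 0) :
    ∀ n : ℤ,
      (∑ᶠ m : ℤ, f m * g (m + n)) ≤ ∑ᶠ m : ℤ, f m * g (m + ν) :=
  crosscorr_max_of_similarly_ordered_general f g hf ν hord
end

section
/- Let x, y : ℤ → ℝ be finitely supported signals, and suppose there exist ν ∈ ℤ and a real number a > 0 such that x[n] = a · y[n + ν] for all n ∈ ℤ. Let sgn : ℝ → ℝ be the sign function (sgn(t) = 1 for t > 0, sgn(0) = 0, sgn(t) = −1 for t < 0). Then the cross-correlation function of sgn ∘ x and sgn ∘ y is maximized at ν; that is, ((sgn ∘ x) ⋆ (sgn ∘ y))[n] ≤ ((sgn ∘ x) ⋆ (sgn ∘ y))[ν] for all n ∈ ℤ. -/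
/-!
Since `a > 0`, `sgn y[m + ν] = sgn x[m]`, so the correlation at `ν` is `Σ sgn(x[m])²`. Signs lie in
`{-1, 0, 1}`, hence `sgn x[m] · sgn y[m + n] ≤ sgn(x[m])²` termwise, and all sums run over the
finite support of `x`.
-/

open Function

namespace Real

variable {α : Type*}

lemma sign_mul_of_pos_left {a : ℝ} (ha : 0 < a) (t : ℝ) : sign (a * t) = sign t := by
  rcases lt_trichotomy t 0 with ht | rfl | ht
  · rw [sign_of_neg ht, sign_of_neg (mul_neg_of_pos_of_neg ha ht)]
  · rw [mul_zero]
  · rw [sign_of_pos ht, sign_of_pos (mul_pos ha ht)]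

lemma sign_mul_sign_le_sign_mul_self (s t : ℝ) : sign s * sign t ≤ sign s * sign s := by
  rcases sign_apply_eq s with hs | hs | hs <;>
    rcases sign_apply_eq t with ht | ht | ht <;> rw [hs, ht] <;> norm_num

lemma support_sign_comp (x : α → ℝ) : support (fun m ↦ sign (x m)) = support x := by
  ext m
  simp only [mem_support, ne_eq, sign_eq_zero_iff]

lemma finsum_sign_mul_sign_le {x : α → ℝ} (hx : (support x).Finite) (z : α → ℝ) :
    ∑ᶠ m, sign (x m) * sign (z m) ≤ ∑ᶠ m, sign (x m) * sign (x m) := by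
  have hfin (g : α → ℝ) : HasFiniteSupport fun m ↦ sign (x m) * g m :=
    hx.subset ((support_mul_subset_left _ _).trans (support_sign_comp x).subset)
  exact finsum_le_finsum' (hfin _) (hfin _) fun m ↦ sign_mul_sign_le_sign_mul_self _ _

end Real

theorem crosscorr_sign_max_at_shift_general
    (x y : ℤ → ℝ)
    (hx : (Function.support x).Finite)
    (ν : ℤ) (a : ℝ) (ha : 0 < a)
    (hxy : ∀ n : ℤ, x n = a * y (n + ν)) :
    ∀ n : ℤ,
      (∑ᶠ m : ℤ, Real.sign (x m) * Real.sign (y (m + n))) ≤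
        ∑ᶠ m : ℤ, Real.sign (x m) * Real.sign (y (m + ν)) := by
  intro n
  have hsign (m : ℤ) : Real.sign (y (m + ν)) = Real.sign (x m) := by
    rw [hxy, Real.sign_mul_of_pos_left ha]
  simp only [hsign]
  exact Real.finsum_sign_mul_sign_le hx _

/-- If `x[n] = a * y[n + ν]` for all `n` with `a > 0`, then the
cross-correlation of `sign ∘ x` and `sign ∘ y` is maximized at `ν`. -/
theorem crosscorr_sign_max_at_shift
    (x y : ℤ → ℝ)
    (hx : (Function.support x).Finite)
    (hy : (Function.support y).Finite)
    (ν : ℤ) (a : ℝ) (ha : 0 < a)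
    (hxy : ∀ n : ℤ, x n = a * y (n + ν)) :
    ∀ n : ℤ,
      (∑ᶠ m : ℤ, Real.sign (x m) * Real.sign (y (m + n))) ≤
        ∑ᶠ m : ℤ, Real.sign (x m) * Real.sign (y (m + ν)) :=
  crosscorr_sign_max_at_shift_general x y hx ν a ha hxy
end

section
/- Let x, y : ℤ → ℝ be finitely supported signals, suppose there exist ν ∈ ℤ and a real number a > 0 such that x[n] = a · y[n + ν] for all n ∈ ℤ, and let φ, ψ : ℝ → ℝ be monotonically non-decreasing functions with φ(0) = ψ(0) = 0. Let S denote the set of maximizers of the cross-correlation function of φ ∘ x and ψ ∘ y, i.e., S = { k ∈ ℤ : ((φ ∘ x) ⋆ (ψ ∘ y))[n] ≤ ((φ ∘ x) ⋆ (ψ ∘ y))[k] for all n ∈ ℤ }. Then ν ∈ S and, moreover, ν maximizes x ⋆ y over S, i.e., (x ⋆ y)[k] ≤ (x ⋆ y)[ν] for all k ∈ S. -/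
open Function Finset

lemma key_corr (u v : ℤ → ℝ) (hu : (Function.support u).Finite)
    (hv : (Function.support v).Finite)
    (huv : ∀ i j : ℤ, v i < v j → u i ≤ u j) (d : ℤ) :
    (∑ᶠ m : ℤ, u m * v (m + d)) ≤ ∑ᶠ m : ℤ, u m * v m := by
  classical
  set T : Finset ℤ := hu.toFinset ∪ hv.toFinset with hT
  set M : ℕ := T.sup (fun m => m.natAbs) with hMdef
  have hM : ∀ m : ℤ, u m ≠ 0 ∨ v m ≠ 0 → m.natAbs ≤ M := by
    intro m hm
    apply Finset.le_sup (f := fun m : ℤ => m.natAbs)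
    simp only [hT, Finset.mem_union, Set.Finite.mem_toFinset, Function.mem_support]
    exact hm
  set N : ℤ := (M : ℤ) + |d| + 1 with hNdef
  set k : ℤ := 2 * N + 1 with hkdef
  have hd : 0 ≤ |d| := abs_nonneg d
  have hdd : d ≤ |d| ∧ -|d| ≤ d := ⟨le_abs_self d, neg_abs_le d⟩
  have hM0 : (0:ℤ) ≤ (M:ℤ) := Int.natCast_nonneg M
  have hk : 0 < k := by omega
  have hMabs : ∀ m : ℤ, u m ≠ 0 ∨ v m ≠ 0 → -(M:ℤ) ≤ m ∧ m ≤ (M:ℤ) := by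
    intro m hm
    have := hM m hm
    omega
  -- the cyclic-shift family
  set f : ℤ → ℤ → ℤ := fun c m => if -N ≤ m ∧ m ≤ N then -N + (m + c + N) % k else m
    with hfdef
  have hmod : ∀ t : ℤ, 0 ≤ t % k ∧ t % k < k := fun t =>
    ⟨Int.emod_nonneg t (ne_of_gt hk), Int.emod_lt_of_pos t hk⟩
  have hmodeq : ∀ s t : ℤ, (s % k - t) % k = (s - t) % k := by
    intro s t
    rw [Int.sub_emod, Int.emod_emod_of_dvd _ dvd_rfl, ← Int.sub_emod]
  have hinv : ∀ c m, f (-c) (f c m) = m := by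
    intro c m
    by_cases h : -N ≤ m ∧ m ≤ N
    · have h1 := hmod (m + c + N)
      have hfm : f c m = -N + (m + c + N) % k := by rw [hfdef]; simp [h]
      have h2 : -N ≤ f c m ∧ f c m ≤ N := by omega
      have : f (-c) (f c m) = -N + ((f c m) + (-c) + N) % k := by
        rw [hfdef] at h2 ⊢; exact if_pos h2
      rw [this, hfm]
      have : (-N + (m + c + N) % k + -c + N) = ((m + c + N) % k - c) := by ring
      rw [this, hmodeq]
      have : (m + c + N - c) = m + N := by ring
      rw [this, Int.emod_eq_of_lt (by omega) (by omega)]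
      omega
    · have hfm : f c m = m := by rw [hfdef]; simp [h]
      rw [hfm, hfdef]; simp [h]
  set σ : Equiv.Perm ℤ :=
    ⟨f d, f (-d), hinv d, by intro m; have := hinv (-d) m; rwa [neg_neg] at this⟩
    with hσdef
  set I : Finset ℤ := Finset.Icc (-N) N with hIdef
  have hσfix : {x : ℤ | σ x ≠ x} ⊆ ↑I := by
    intro m hm
    simp only [Set.mem_setOf_eq] at hm
    by_contra hmI
    simp only [hIdef, Finset.coe_Icc, Set.mem_Icc, not_and_or, not_le] at hmI
    apply hm
    show f d m = m
    rw [hfdef]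
    simp only [ite_eq_right_iff]
    intro h; omega
  have hmono : MonovaryOn u v ↑I := by
    intro i _ j _ hij
    exact huv _ _ hij
  have hrear := hmono.sum_smul_comp_perm_le_sum_smul hσfix
  simp only [smul_eq_mul] at hrear
  -- identify the permuted sum with the shifted sum
  have hperm : ∑ i ∈ I, u i * v (σ i) = ∑ i ∈ I, u i * v (i + d) := by
    apply Finset.sum_congr rfl
    intro i hi
    simp only [hIdef, Finset.mem_Icc] at hi
    have hσi : σ i = -N + (i + d + N) % k := by
      show f d i = _
      rw [hfdef]; simp [hi]
    by_cases hid : -N ≤ i + d ∧ i + d ≤ N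
    · have : (i + d + N) % k = i + d + N := Int.emod_eq_of_lt (by omega) (by omega)
      rw [hσi, this]
      congr 2
      omega
    · -- both v values vanish
      have hv1 : v (i + d) = 0 := by
        by_contra hne
        have := hMabs (i + d) (Or.inr hne)
        omega
      have hv2 : v (σ i) = 0 := by
        by_contra hne
        have hb := hMabs (σ i) (Or.inr hne)
        rw [hσi] at hb
        rcases lt_or_ge N (i + d) with hgt | hle
        · have e1 : (i + d + N + k * (-1)) % k = (i + d + N) % k :=
            Int.add_mul_emod_self_left _ _ _
          have e2 : (i + d + N + k * (-1)) % k = i + d + N + k * (-1) :=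
            Int.emod_eq_of_lt (by omega) (by omega)
          omega
        · have hlt : i + d < -N := by omega
          have e1 : (i + d + N + k * 1) % k = (i + d + N) % k :=
            Int.add_mul_emod_self_left _ _ _
          have e2 : (i + d + N + k * 1) % k = i + d + N + k * 1 :=
            Int.emod_eq_of_lt (by omega) (by omega)
          omega
      rw [hv1, hv2]
  -- convert the finsums
  have hsupp1 : (Function.support fun m => u m * v (m + d)) ⊆ ↑I := by
    intro m hm
    simp only [Function.mem_support] at hm
    have : u m ≠ 0 := fun h => hm (by rw [h, zero_mul])
    have := hMabs m (Or.inl this)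
    simp only [hIdef, Finset.coe_Icc, Set.mem_Icc]
    omega
  have hsupp2 : (Function.support fun m => u m * v m) ⊆ ↑I := by
    intro m hm
    simp only [Function.mem_support] at hm
    have : u m ≠ 0 := fun h => hm (by rw [h, zero_mul])
    have := hMabs m (Or.inl this)
    simp only [hIdef, Finset.coe_Icc, Set.mem_Icc]
    omega
  rw [finsum_eq_finset_sum_of_support_subset _ hsupp1,
      finsum_eq_finset_sum_of_support_subset _ hsupp2]
  calc ∑ i ∈ I, u i * v (i + d) = ∑ i ∈ I, u i * v (σ i) := hperm.symm
    _ ≤ ∑ i ∈ I, u i * v i := hrear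

/-- Correctness of Algorithm 1: the true shift `ν` belongs to the set `S` of
maximizers of the quantized cross-correlation, and `ν` maximizes the original
cross-correlation `x ⋆ y` over `S`. -/
theorem algorithm_correctness
    (x y : ℤ → ℝ)
    (hx : (Function.support x).Finite)
    (hy : (Function.support y).Finite)
    (ν : ℤ) (a : ℝ) (ha : 0 < a)
    (hxy : ∀ n : ℤ, x n = a * y (n + ν))
    (φ ψ : ℝ → ℝ) (hφ : Monotone φ) (hψ : Monotone ψ)
    (hφ0 : φ 0 = 0) (hψ0 : ψ 0 = 0)
    (S : Set ℤ)
    (hS : S = {k : ℤ | ∀ n : ℤ,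
      (∑ᶠ m : ℤ, φ (x m) * ψ (y (m + n))) ≤
        ∑ᶠ m : ℤ, φ (x m) * ψ (y (m + k))}) :
    ν ∈ S ∧ ∀ k ∈ S,
      (∑ᶠ m : ℤ, x m * y (m + k)) ≤ ∑ᶠ m : ℤ, x m * y (m + ν) := by
  have hvfin : (Function.support fun m : ℤ => y (m + ν)).Finite := by
    apply Set.Finite.subset (Set.Finite.preimage (Set.injOn_of_injective
      (add_left_injective ν)) hy)
    intro m hm
    exact hm
  constructor
  · rw [hS]
    intro n
    have hu : (Function.support fun m : ℤ => φ (x m)).Finite := by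
      apply hx.subset
      intro m hm
      simp only [Function.mem_support] at hm ⊢
      intro h; exact hm (by rw [h, hφ0])
    have hv : (Function.support fun m : ℤ => ψ (y (m + ν))).Finite := by
      apply hvfin.subset
      intro m hm
      simp only [Function.mem_support] at hm ⊢
      intro h; exact hm (by rw [h, hψ0])
    have huv : ∀ i j : ℤ, ψ (y (i + ν)) < ψ (y (j + ν)) → φ (x i) ≤ φ (x j) := by
      intro i j hij
      have hyy : y (i + ν) < y (j + ν) := by
        by_contra h
        exact absurd (hψ (not_lt.1 h)) (not_le.2 hij)
      apply hφ
      rw [hxy i, hxy j]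
      exact mul_le_mul_of_nonneg_left hyy.le ha.le
    have := key_corr (fun m => φ (x m)) (fun m => ψ (y (m + ν))) hu hv huv (n - ν)
    calc (∑ᶠ m : ℤ, φ (x m) * ψ (y (m + n)))
        = ∑ᶠ m : ℤ, φ (x m) * ψ (y (m + (n - ν) + ν)) := by
          apply finsum_congr
          intro m
          rw [show m + (n - ν) + ν = m + n by ring]
      _ ≤ ∑ᶠ m : ℤ, φ (x m) * ψ (y (m + ν)) := this
  · intro k _
    have huv : ∀ i j : ℤ, y (i + ν) < y (j + ν) → x i ≤ x j := by
      intro i j hij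
      rw [hxy i, hxy j]
      exact mul_le_mul_of_nonneg_left hij.le ha.le
    have := key_corr x (fun m => y (m + ν)) hx hvfin huv (k - ν)
    calc (∑ᶠ m : ℤ, x m * y (m + k))
        = ∑ᶠ m : ℤ, x m * y (m + (k - ν) + ν) := by
          apply finsum_congr
          intro m
          rw [show m + (k - ν) + ν = m + k by ring]
      _ ≤ ∑ᶠ m : ℤ, x m * y (m + ν) := this
end

section
/- Let M be a positive natural number and L ∈ ℕ with 2^L > 2M, and let c, c' : {0, …, T−1} → ℤ be integer sequences of the same length T with |c[n]| ≤ M and |c'[n]| ≤ M for all n. If Σ_{n=0}^{T−1} c[n] · 2^{L·n} = Σ_{n=0}^{T−1} c'[n] · 2^{L·n}, then c[n] = c'[n] for all n ∈ {0, …, T−1}. -/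
lemma kron_aux (L : ℕ) (B : ℤ) (hB : 0 ≤ B) (hL : B < 2 ^ L) :
    ∀ T (d : ℕ → ℤ), (∀ n < T, |d n| ≤ B) →
      ∑ n ∈ Finset.range T, d n * 2 ^ (L * n) = 0 → ∀ n < T, d n = 0 := by
  intro T
  induction T with
  | zero => intro d _ _ n hn; omega
  | succ T ih =>
    intro d hbd hsum n hn
    rw [Finset.sum_range_succ'] at hsum
    have hre : ∀ i, d (i + 1) * 2 ^ (L * (i + 1)) = (d (i + 1) * 2 ^ (L * i)) * 2 ^ L := by
      intro i
      rw [mul_add, pow_add]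
      ring
    simp only [hre] at hsum
    rw [← Finset.sum_mul] at hsum
    have hdvd : (2 : ℤ) ^ L ∣ d 0 := by
      have : d 0 = -((∑ i ∈ Finset.range T, d (i + 1) * 2 ^ (L * i)) * 2 ^ L) := by
        simp at hsum ⊢; linarith
      rw [this]
      exact dvd_neg.mpr (dvd_mul_left _ _)
    have hlt : |d 0| < 2 ^ L := by
      have := hbd 0 (Nat.succ_pos T)
      linarith
    have h0 : d 0 = 0 := by
      rcases Int.eq_zero_of_abs_lt_dvd hdvd hlt with h
      exact h
    have hsum' : ∑ i ∈ Finset.range T, d (i + 1) * 2 ^ (L * i) = 0 := by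
      have h2 : (2 : ℤ) ^ L ≠ 0 := by positivity
      have : (∑ i ∈ Finset.range T, d (i + 1) * 2 ^ (L * i)) * 2 ^ L = 0 := by
        rw [h0] at hsum; simpa using hsum
      exact (mul_eq_zero.mp this).resolve_right h2
    have hih := ih (fun i => d (i + 1)) (fun i hi => hbd (i + 1) (by omega)) hsum'
    cases n with
    | zero => exact h0
    | succ m => exact hih m (by omega)

/-- Uniqueness underlying Kronecker substitution: a sequence of integers
bounded in absolute value by `M` is uniquely determined by the evaluation
`Σ c[n] · 2^(L·n)`, provided `2^L > 2M`. -/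
theorem kronecker_uniqueness
    (M : ℕ) (hM : 0 < M) (L : ℕ) (hL : 2 ^ L > 2 * M)
    (T : ℕ) (c c' : ℕ → ℤ)
    (hc : ∀ n < T, |c n| ≤ (M : ℤ))
    (hc' : ∀ n < T, |c' n| ≤ (M : ℤ))
    (heq : ∑ n ∈ Finset.range T, c n * 2 ^ (L * n) =
      ∑ n ∈ Finset.range T, c' n * 2 ^ (L * n)) :
    ∀ n < T, c n = c' n := by
  have hL' : 2 * (M : ℤ) < 2 ^ L := by exact_mod_cast hL
  have hbd : ∀ n < T, |c n - c' n| ≤ 2 * (M : ℤ) := by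
    intro n hn
    calc |c n - c' n| ≤ |c n| + |c' n| := abs_sub _ _
      _ ≤ M + M := add_le_add (hc n hn) (hc' n hn)
      _ = 2 * M := by ring
  have hsum : ∑ n ∈ Finset.range T, (c n - c' n) * 2 ^ (L * n) = 0 := by
    simp only [sub_mul, Finset.sum_sub_distrib]
    omega
  have := kron_aux L (2 * M) (by positivity) hL' T (fun n => c n - c' n) hbd hsum
  intro n hn
  have h := this n hn
  linarith
end
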